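/- arXiv:2309.09315 — 2 statements merged into one kernel-verified Lean document; each statement's English description precedes it below -/
import Mathlib

section
/- Strassen's construction gives a rank-7 bilinear algorithm for 2×2 matrix multiplication: there exist tensors a, b ∈ F^{7×2×2} and c ∈ F^{7×2×2} with entries in {−1, 0, 1} such that for all 2×2 matrices A, B over any commutative ring, Σ_{r=1}^7 c_{r,k,j} (Σ_{k',ℓ'} a_{r,k',ℓ'} A_{k',ℓ'})(Σ_{ℓ',j'} b_{r,ℓ',j'} B_{ℓ',j'}) = (AB)_{k,j} for all k, j ∈ {1,2}. -/
open Finset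

def sA : Fin 7 → Fin 2 → Fin 2 → ℤ :=
  ![![![1,0],![0,1]], ![![0,0],![1,1]], ![![1,0],![0,0]],
    ![![0,0],![0,1]], ![![1,1],![0,0]], ![![-1,0],![1,0]],
    ![![0,1],![0,-1]]]

def sB : Fin 7 → Fin 2 → Fin 2 → ℤ :=
  ![![![1,0],![0,1]], ![![1,0],![0,0]], ![![0,1],![0,-1]],
    ![![-1,0],![1,0]], ![![0,0],![0,1]], ![![1,1],![0,0]],
    ![![0,0],![1,1]]]

def sC : Fin 7 → Fin 2 → Fin 2 → ℤ :=
  ![![![1,0],![0,1]], ![![0,0],![1,-1]], ![![0,1],![0,1]],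
    ![![1,0],![1,0]], ![![-1,1],![0,0]], ![![0,0],![0,1]],
    ![![1,0],![0,0]]]

/-- Strassen's construction: there is a rank-7 bilinear algorithm for 2×2 matrix
multiplication, given by integer tensors `a, b, c` with entries in `{−1, 0, 1}`,
valid over every commutative ring. -/
theorem strassen_rank_seven_bilinear_algorithm :
    ∃ a b c : Fin 7 → Fin 2 → Fin 2 → ℤ,
      (∀ r k j, a r k j ∈ ({-1, 0, 1} : Set ℤ)) ∧
      (∀ r k j, b r k j ∈ ({-1, 0, 1} : Set ℤ)) ∧
      (∀ r k j, c r k j ∈ ({-1, 0, 1} : Set ℤ)) ∧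
      ∀ (R : Type) (_ : CommRing R) (A B : Matrix (Fin 2) (Fin 2) R) (k j : Fin 2),
        (∑ r : Fin 7, (c r k j : R) *
            ((∑ k' : Fin 2, ∑ l' : Fin 2, (a r k' l' : R) * A k' l') *
             (∑ l' : Fin 2, ∑ j' : Fin 2, (b r l' j' : R) * B l' j')))
          = (A * B) k j := by
  refine ⟨sA, sB, sC, ?_, ?_, ?_, ?_⟩
  · decide
  · decide
  · decide
  · intro R _ A B k j
    fin_cases k <;> fin_cases j <;>
      simp [sA, sB, sC, Fin.sum_univ_succ, Matrix.mul_apply] <;> ring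
end

section
/- Information-theoretic privacy of Lagrange sharing: let W ∈ F_q be a random variable, let P₁,...,P_X be i.i.d. uniform on F_q and independent of W, let β₁,...,β_{X+1} ∈ F_q be pairwise distinct, and let α₁,...,α_X ∈ F_q be pairwise distinct with α_k ∉ {β₁,...,β_{X+1}}. Define shares f(α_k) for k ∈ [X] where f(z) = W·l₁(z) + Σ_{j=1}^X P_j·l_{j+1}(z) and l_t is the t-th Lagrange basis polynomial on nodes β₁,...,β_{X+1}. Then the joint distribution (f(α₁),...,f(α_X)) is uniform on F_q^X and independent of W; in particular I(W; f(α₁),...,f(α_X)) = 0. -/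
/-!
For a fixed secret `w` the share vector is `w • c + P ᵥ* M` with `c k = l₁(α k)` and
`M j k = l_{j+1}(α k)`. The matrix `M` is invertible: if `p ᵥ* M = 0`, the interpolation
polynomial with value `0` at `β₁` and `p j` at `β_{j+1}` has degree `≤ X` and vanishes at the
`X + 1` distinct points `β₁, α₁, …, α_X`, hence is zero, and so is `p`. Thus on the event
`W = w` the shares are a bijective image of the uniform vector `P`, independent of `W`, so
`μ (W = w, shares = v) = μ (W = w) / q ^ X`; summing over `w` gives uniformity, and the
factorisation is independence.
-/

open MeasureTheory ProbabilityTheory Finset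
open scoped Matrix

open Polynomial in
theorem Lagrange.eval_basis_eq_prod {F ι : Type*} [Field F] [DecidableEq ι]
    (s : Finset ι) (v : ι → F) (i : ι) (z : F) :
    (Lagrange.basis s v i).eval z = ∏ j ∈ s.erase i, (z - v j) / (v i - v j) := by
  simp only [Lagrange.basis, eval_prod, Lagrange.basisDivisor, eval_mul, eval_C, eval_sub, eval_X,
    div_eq_mul_inv, mul_comm]

theorem Lagrange.eval_interpolate_cons_zero {F : Type*} [Field F] {n : ℕ} (β : Fin (n + 1) → F)
    (p : Fin n → F) (z : F) :
    (Lagrange.interpolate univ β (Fin.cons 0 p)).eval z =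
      ∑ j, p j * (Lagrange.basis univ β j.succ).eval z := by
  simp [Lagrange.interpolate_apply, Polynomial.eval_finsetSum, Fin.sum_univ_succ]

theorem Lagrange.vecMul_eval_basis_succ_injective {F : Type*} [Field F] {n : ℕ}
    {β : Fin (n + 1) → F} (hβ : Function.Injective β) {α : Fin n → F}
    (hα : Function.Injective α) (hαβ : ∀ k, α k ≠ β 0) :
    Function.Injective fun p : Fin n → F =>
      p ᵥ* Matrix.of fun j k => (Lagrange.basis univ β j.succ).eval (α k) := by
  intro p p' h
  have hγ : Function.Injective (Fin.cons (β 0) α : Fin (n + 1) → F) :=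
    Fin.cons_injective_iff.2 ⟨fun ⟨k, hk⟩ => hαβ k hk, hα⟩
  have key : Lagrange.interpolate univ β (Fin.cons 0 p) =
      Lagrange.interpolate univ β (Fin.cons 0 p') := by
    refine Polynomial.eq_of_degrees_lt_of_eval_index_eq univ hγ.injOn
      (Lagrange.degree_interpolate_lt _ hβ.injOn) (Lagrange.degree_interpolate_lt _ hβ.injOn)
      fun i _ => ?_
    cases i using Fin.cases with
    | zero =>
      rw [Fin.cons_zero, Lagrange.eval_interpolate_at_node _ hβ.injOn (mem_univ 0),
        Lagrange.eval_interpolate_at_node _ hβ.injOn (mem_univ 0), Fin.cons_zero, Fin.cons_zero]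
    | succ k =>
      rw [Fin.cons_succ, Lagrange.eval_interpolate_cons_zero, Lagrange.eval_interpolate_cons_zero]
      exact congrFun h k
  funext j
  have := congrArg (Polynomial.eval (β j.succ)) key
  rwa [Lagrange.eval_interpolate_at_node _ hβ.injOn (mem_univ _),
    Lagrange.eval_interpolate_at_node _ hβ.injOn (mem_univ _), Fin.cons_succ,
    Fin.cons_succ] at this

theorem Set.preimage_singleton_inter_preimage_equiv {Ω α β γ : Type*} (e : α → β ≃ γ)
    (f : Ω → α) (g : Ω → β) (a : α) (c : γ) :
    f ⁻¹' {a} ∩ (fun ω => e (f ω) (g ω)) ⁻¹' {c} =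
      f ⁻¹' {a} ∩ g ⁻¹' {(e a).symm c} := by
  ext ω
  simp only [Set.mem_inter_iff, Set.mem_preimage, Set.mem_singleton_iff]
  constructor
  · rintro ⟨rfl, h⟩
    exact ⟨rfl, by rw [← h, Equiv.symm_apply_apply]⟩
  · rintro ⟨rfl, h⟩
    exact ⟨rfl, by rw [h, Equiv.apply_symm_apply]⟩

section
variable {Ω α β : Type*} [MeasurableSpace Ω] {μ : Measure Ω} [MeasurableSpace α]
  [MeasurableSingletonClass α]

theorem measure_preimage_singleton_eq_of_inter_eq_mul [Fintype α] [IsProbabilityMeasure μ]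
    {f : Ω → α} {g : Ω → β} (hf : Measurable f) {b : β} {c : ENNReal}
    (h : ∀ a, μ (f ⁻¹' {a} ∩ g ⁻¹' {b}) = μ (f ⁻¹' {a}) * c) :
    μ (g ⁻¹' {b}) = c := by
  have hf' : ∀ a ∈ (univ : Finset α), MeasurableSet (f ⁻¹' {a}) :=
    fun a _ => hf (measurableSet_singleton a)
  calc μ (g ⁻¹' {b}) = μ.restrict (g ⁻¹' {b}) (f ⁻¹' ↑(univ : Finset α)) := by
        rw [coe_univ, Set.preimage_univ, Measure.restrict_apply_univ]
    _ = ∑ a, μ (f ⁻¹' {a} ∩ g ⁻¹' {b}) := by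
        rw [← sum_measure_preimage_singleton _ hf']
        exact sum_congr rfl fun a _ => Measure.restrict_apply (hf' a (mem_univ a))
    _ = (∑ a, μ (f ⁻¹' {a})) * c := by simp only [h, sum_mul]
    _ = c := by
        rw [sum_measure_preimage_singleton _ hf', coe_univ, Set.preimage_univ, measure_univ,
          one_mul]

theorem indepFun_of_measure_inter_preimage_singleton [Countable α] [Countable β]
    [MeasurableSpace β] [MeasurableSingletonClass β] [IsFiniteMeasure μ]
    {f : Ω → α} {g : Ω → β}
    (hf : Measurable f) (hg : Measurable g)
    (h : ∀ a b, μ (f ⁻¹' {a} ∩ g ⁻¹' {b}) = μ (f ⁻¹' {a}) * μ (g ⁻¹' {b})) :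
    IndepFun f g μ := by
  rw [indepFun_iff_map_prod_eq_prod_map_map hf.aemeasurable hg.aemeasurable]
  refine Measure.ext_of_singleton fun ⟨a, b⟩ => ?_
  rw [← Set.singleton_prod_singleton, Measure.prod_prod,
    Measure.map_apply (hf.prodMk hg) ((measurableSet_singleton a).prod (measurableSet_singleton b)),
    Measure.map_apply hf (measurableSet_singleton a),
    Measure.map_apply hg (measurableSet_singleton b), Set.mk_preimage_prod, h]

theorem ProbabilityTheory.iIndepFun.measure_preimage_singleton_inter_pi {n : ℕ} {W : Ω → α}
    {P : Fin n → Ω → α}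
    (h : iIndepFun (Fin.cons W P : Fin (n + 1) → Ω → α) μ) (a : α) (p : Fin n → α) :
    μ (W ⁻¹' {a} ∩ (fun ω j => P j ω) ⁻¹' {p}) =
      μ (W ⁻¹' {a}) * ∏ j, μ (P j ⁻¹' {p j}) := by
  have hset : W ⁻¹' {a} ∩ (fun ω j => P j ω) ⁻¹' {p} =
      ⋂ i, (Fin.cons W P : Fin (n + 1) → Ω → α) i ⁻¹'
        {(Fin.cons a p : Fin (n + 1) → α) i} := by
    ext ω
    simp [Fin.forall_fin_succ, funext_iff]
  rw [hset, h.meas_iInter fun i => ⟨_, measurableSet_singleton _, rfl⟩, Fin.prod_univ_succ]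
  simp
end

theorem lagrange_sharing_privacy_general
    {Ω : Type*} [MeasurableSpace Ω] (μ : Measure Ω) [IsProbabilityMeasure μ]
    {F : Type*} [Field F] [Fintype F] [MeasurableSpace F] [MeasurableSingletonClass F]
    {X : ℕ}
    (W : Ω → F) (P : Fin X → Ω → F)
    (hmW : Measurable W) (hmP : ∀ j, Measurable (P j))
    -- W, P₁, ..., P_X are mutually independent
    (hindep : ProbabilityTheory.iIndepFun (m := fun _ : Fin (X + 1) => ‹MeasurableSpace F›)
      (Fin.cons W P) μ)
    -- each Pⱼ is uniform on F
    (hPunif : ∀ j, ∀ x : F, μ (P j ⁻¹' {x}) = 1 / (Fintype.card F : ENNReal))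
    (β : Fin (X + 1) → F) (hβ : Function.Injective β)
    (α : Fin X → F) (hα : Function.Injective α)
    (hαβ : ∀ k j, α k ≠ β j)
    -- the Lagrange basis functions on the nodes β
    (l : Fin (X + 1) → F → F)
    (hl : ∀ t z, l t z = ∏ s ∈ univ \ {t}, (z - β s) / (β t - β s))
    -- the shares
    (share : Fin X → Ω → F)
    (hshare : ∀ k ω, share k ω = W ω * l 0 (α k) + ∑ j : Fin X, P j ω * l j.succ (α k)) :
    (∀ v : Fin X → F,
        μ ((fun ω k => share k ω) ⁻¹' {v}) = 1 / ((Fintype.card F : ENNReal)) ^ X)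
    ∧ ProbabilityTheory.IndepFun W (fun ω k => share k ω) μ := by
  set Z : Ω → Fin X → F := fun ω k => share k ω
  have hinj := Lagrange.vecMul_eval_basis_succ_injective hβ hα fun k => hαβ k 0
  obtain ⟨e, he⟩ : ∃ e : F → (Fin X → F) ≃ (Fin X → F), ∀ w p, e w p =
      (fun k => w * (Lagrange.basis univ β 0).eval (α k)) +
        p ᵥ* Matrix.of fun j k => (Lagrange.basis univ β j.succ).eval (α k) :=
    ⟨fun w => (Equiv.ofBijective _ (Finite.injective_iff_bijective.1 hinj)).trans
      (Equiv.addLeft _), fun _ _ => rfl⟩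
  have hZ : Z = fun ω => e (W ω) (fun j => P j ω) := by
    funext ω k
    simp [Z, he, hshare, hl, Lagrange.eval_basis_eq_prod, Matrix.vecMul, dotProduct,
      sdiff_singleton_eq_erase]
  have hZmeas : Measurable Z := by
    rw [hZ]
    exact (measurable_of_finite fun x : F × (Fin X → F) => e x.1 x.2).comp
      (hmW.prodMk (measurable_pi_lambda _ hmP))
  have hjoint : ∀ w v, μ (W ⁻¹' {w} ∩ Z ⁻¹' {v}) =
      μ (W ⁻¹' {w}) * (1 / (Fintype.card F : ENNReal) ^ X) := by
    intro w v
    rw [hZ, Set.preimage_singleton_inter_preimage_equiv,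
      hindep.measure_preimage_singleton_inter_pi]
    simp [hPunif, ENNReal.inv_pow]
  have hunif : ∀ v, μ (Z ⁻¹' {v}) = 1 / (Fintype.card F : ENNReal) ^ X := fun v =>
    measure_preimage_singleton_eq_of_inter_eq_mul hmW (hjoint · v)
  exact ⟨hunif, indepFun_of_measure_inter_preimage_singleton hmW hZmeas fun w v => by
    rw [hjoint, hunif]⟩

/-- Information-theoretic privacy of Lagrange sharing: with `P₁,...,P_X` i.i.d. uniform
and independent of the secret `W`, the shares `f(α₁),...,f(α_X)` of
`f(z) = W·l₁(z) + Σⱼ Pⱼ·l_{j+1}(z)` are jointly uniform on `F^X` and independent of `W`;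
in particular the mutual information `I(W; shares)` vanishes. -/
theorem lagrange_sharing_privacy
    {Ω : Type*} [MeasurableSpace Ω] (μ : Measure Ω) [IsProbabilityMeasure μ]
    {F : Type*} [Field F] [Fintype F] [MeasurableSpace F] [MeasurableSingletonClass F]
    {X : ℕ} (hX : 1 ≤ X)
    (W : Ω → F) (P : Fin X → Ω → F)
    (hmW : Measurable W) (hmP : ∀ j, Measurable (P j))
    -- W, P₁, ..., P_X are mutually independent
    (hindep : ProbabilityTheory.iIndepFun (m := fun _ : Fin (X + 1) => ‹MeasurableSpace F›)
      (Fin.cons W P) μ)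
    -- each Pⱼ is uniform on F
    (hPunif : ∀ j, ∀ x : F, μ (P j ⁻¹' {x}) = 1 / (Fintype.card F : ENNReal))
    (β : Fin (X + 1) → F) (hβ : Function.Injective β)
    (α : Fin X → F) (hα : Function.Injective α)
    (hαβ : ∀ k j, α k ≠ β j)
    -- the Lagrange basis functions on the nodes β
    (l : Fin (X + 1) → F → F)
    (hl : ∀ t z, l t z = ∏ s ∈ univ \ {t}, (z - β s) / (β t - β s))
    -- the shares
    (share : Fin X → Ω → F)
    (hshare : ∀ k ω, share k ω = W ω * l 0 (α k) + ∑ j : Fin X, P j ω * l j.succ (α k)) :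
    (∀ v : Fin X → F,
        μ ((fun ω k => share k ω) ⁻¹' {v}) = 1 / ((Fintype.card F : ENNReal)) ^ X)
    ∧ ProbabilityTheory.IndepFun W (fun ω k => share k ω) μ :=
  lagrange_sharing_privacy_general μ W P hmW hmP hindep hPunif β hβ α hα hαβ l hl share hshare
end
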